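/- Let α > 0 and let û be a minimizer of j(u) = (1/2)‖S u − p_d‖²_{H₂} + α‖u‖_{M(D,H₁)}, where S is the dual of a bounded operator S* : H₂ → C(D,H₁). Define ξ̂ = −S*(S û − p_d). Then ‖ξ̂‖_{C(D,H₁)} ≤ α and the support of |û| is contained in the set { x ∈ D : ‖ξ̂(x)‖_{H₁} = α }. -/

import Mathlib

open NormedSpace

/-- The support of an `H`-valued vector measure `u` on `D` (identified with an element of
the dual of `C(D,H)`): `x ∈ supp |u|` iff `u` does not vanish on any neighborhood of
`x`. -/
def measSupport {D H : Type*} [TopologicalSpace D] [CompactSpace D]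
    [NormedAddCommGroup H] [NormedSpace ℝ H] (u : StrongDual ℝ C(D, H)) : Set D :=
  {x : D | ∀ U ∈ nhds x, ∃ φ : C(D, H), (∀ y ∉ U, φ y = 0) ∧ u φ ≠ 0}
open NormedSpace

section Aux
variable {D H : Type*} [MetricSpace D] [CompactSpace D]
  [NormedAddCommGroup H] [NormedSpace ℝ H]

/-- Multiplication by a scalar continuous function, as a continuous linear map on `C(D,H)`. -/
noncomputable def mulCLM (η : C(D, ℝ)) : C(D, H) →L[ℝ] C(D, H) :=
  LinearMap.mkContinuous
    { toFun := fun ψ => ⟨fun y => η y • ψ y, (map_continuous η).smul (map_continuous ψ)⟩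
      map_add' := by intro ψ χ; ext y; simp [smul_add]
      map_smul' := by
        intro c ψ; ext y
        simp only [ContinuousMap.coe_mk, ContinuousMap.smul_apply, RingHom.id_apply]
        exact smul_comm _ _ _ }
    ‖η‖ (by
      intro ψ
      refine (ContinuousMap.norm_le _ (by positivity)).2 fun y => ?_
      calc ‖η y • ψ y‖ = ‖η y‖ * ‖ψ y‖ := norm_smul _ _
        _ ≤ ‖η‖ * ‖ψ‖ :=
          mul_le_mul (η.norm_coe_le_norm y) (ψ.norm_coe_le_norm y) (norm_nonneg _)
            (norm_nonneg _))

@[simp] lemma mulCLM_apply (η : C(D, ℝ)) (ψ : C(D, H)) (y : D) :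
    mulCLM η ψ y = η y • ψ y := rfl

/-- Disjoint-support localization inequality. -/
lemma loc_ineq (u : StrongDual ℝ C(D, H)) (η : C(D, ℝ)) (ψ : C(D, H))
    (h0 : ∀ y, 0 ≤ η y) (h1 : ∀ y, η y ≤ 1) (hsup : ∀ y, ψ y ≠ 0 → η y = 1)
    (hψ : ∀ y, ‖ψ y‖ ≤ 1) :
    ‖u.comp (mulCLM ((1 : C(D, ℝ)) - η))‖ + u ψ ≤ ‖u‖ := by
  have hψn : ‖ψ‖ ≤ 1 := (ContinuousMap.norm_le _ zero_le_one).2 hψ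
  have huψ : u ψ ≤ ‖u‖ := by
    have := u.le_opNorm ψ
    have h2 : ‖u ψ‖ ≤ ‖u‖ := by nlinarith [norm_nonneg u]
    calc u ψ ≤ ‖u ψ‖ := le_abs_self _
      _ ≤ ‖u‖ := h2
  have key : ∀ g : C(D, H), u (mulCLM ((1 : C(D, ℝ)) - η) g) + ‖g‖ * u ψ ≤ ‖u‖ * ‖g‖ := by
    intro g
    have hpt : ‖mulCLM ((1 : C(D, ℝ)) - η) g + ‖g‖ • ψ‖ ≤ ‖g‖ :=
      (ContinuousMap.norm_le _ (norm_nonneg g)).2 fun y => by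
        by_cases hy : ψ y = 0
        · simp only [ContinuousMap.add_apply, ContinuousMap.smul_apply, mulCLM_apply, hy,
            smul_zero, add_zero, ContinuousMap.sub_apply, ContinuousMap.one_apply]
          have habs : ‖(1 - η y) • g y‖ = |1 - η y| * ‖g y‖ := by
            rw [norm_smul, Real.norm_eq_abs]
          rw [habs]
          have := g.norm_coe_le_norm y
          have h0' := h0 y
          have h1' := h1 y
          have : |1 - η y| ≤ 1 := abs_le.2 ⟨by linarith, by linarith⟩
          nlinarith [norm_nonneg (g y), norm_nonneg g]
        · have hη : η y = 1 := hsup y hy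
          simp only [ContinuousMap.add_apply, ContinuousMap.smul_apply, mulCLM_apply,
            ContinuousMap.sub_apply, ContinuousMap.one_apply, hη, sub_self, zero_smul, zero_add]
          rw [norm_smul, Real.norm_eq_abs, abs_of_nonneg (norm_nonneg g)]
          nlinarith [hψ y, norm_nonneg g]
    have := u.le_opNorm (mulCLM ((1 : C(D, ℝ)) - η) g + ‖g‖ • ψ)
    have heq : u (mulCLM ((1 : C(D, ℝ)) - η) g + ‖g‖ • ψ)
        = u (mulCLM ((1 : C(D, ℝ)) - η) g) + ‖g‖ * u ψ := by
      rw [map_add, map_smul, smul_eq_mul]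
    have hb : ‖u (mulCLM ((1 : C(D, ℝ)) - η) g + ‖g‖ • ψ)‖ ≤ ‖u‖ * ‖g‖ :=
      this.trans (mul_le_mul_of_nonneg_left hpt (norm_nonneg u))
    have := le_trans (le_abs_self _) hb
    rw [heq] at this
    exact this
  have hb : ‖u.comp (mulCLM ((1 : C(D, ℝ)) - η))‖ ≤ ‖u‖ - u ψ := by
    apply ContinuousLinearMap.opNorm_le_bound _ (by linarith)
    intro g
    have hg1 := key g
    have hg2 := key (-g)
    rw [map_neg, map_neg, norm_neg] at hg2
    rw [ContinuousLinearMap.comp_apply, Real.norm_eq_abs, abs_le]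
    constructor <;> nlinarith
  linarith
end Aux

set_option maxHeartbeats 1000000 in
theorem optimality_conditions_support
    (D H₁ H₂ : Type*) [MetricSpace D] [CompactSpace D]
    [NormedAddCommGroup H₁] [InnerProductSpace ℝ H₁] [CompleteSpace H₁]
    [TopologicalSpace.SeparableSpace H₁]
    [NormedAddCommGroup H₂] [InnerProductSpace ℝ H₂] [CompleteSpace H₂]
    (S : StrongDual ℝ C(D, H₁) →ₗ[ℝ] H₂)
    (Sstar : H₂ →L[ℝ] C(D, H₁))
    (hdual : ∀ (u : StrongDual ℝ C(D, H₁)) (y : H₂),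
      (inner ℝ (S u) y : ℝ) = u (Sstar y))
    (p_d : H₂) (α : ℝ) (hα : 0 < α)
    (uhat : StrongDual ℝ C(D, H₁))
    (hmin : ∀ v, (1 / 2) * ‖S uhat - p_d‖ ^ 2 + α * ‖uhat‖ ≤
                  (1 / 2) * ‖S v - p_d‖ ^ 2 + α * ‖v‖)
    (ξhat : C(D, H₁)) (hξhat : ξhat = -Sstar (S uhat - p_d)) :
    ‖ξhat‖ ≤ α ∧ measSupport uhat ⊆ {x : D | ‖ξhat x‖ = α} := by
  set e : H₂ := S uhat - p_d with he
  -- the directional (first–order) inequality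
  have hdir : ∀ w : StrongDual ℝ C(D, H₁), w ξhat ≤ α * ‖w‖ := by
    intro w
    have key : ∀ t : ℝ, 0 < t → w ξhat ≤ α * ‖w‖ + t * (‖S w‖ ^ 2 / 2) := by
      intro t ht
      have h := hmin (uhat + t • w)
      have hS : S (uhat + t • w) - p_d = e + t • S w := by
        rw [map_add, map_smul]; rw [he]; abel
      rw [hS] at h
      have hexp : ‖e + t • S w‖ ^ 2
          = ‖e‖ ^ 2 + 2 * (t * inner ℝ e (S w)) + t ^ 2 * ‖S w‖ ^ 2 := by
        rw [norm_add_sq_real, real_inner_smul_right, norm_smul, mul_pow,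
          Real.norm_eq_abs, sq_abs]
      have hip : (inner ℝ e (S w) : ℝ) = - w ξhat := by
        rw [real_inner_comm, hdual w e, hξhat]
        simp
      have htri : ‖uhat + t • w‖ ≤ ‖uhat‖ + t * ‖w‖ := by
        calc ‖uhat + t • w‖ ≤ ‖uhat‖ + ‖t • w‖ := norm_add_le uhat (t • w)
          _ = ‖uhat‖ + t * ‖w‖ := by rw [show ‖t • w‖ = t * ‖w‖ from norm_smul_of_nonneg ht.le w]
      rw [hexp, hip] at h
      have htri' : α * ‖uhat + t • w‖ ≤ α * (‖uhat‖ + t * ‖w‖) :=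
        mul_le_mul_of_nonneg_left htri hα.le
      have h' : 0 ≤ t * (- w ξhat) + t ^ 2 * ‖S w‖ ^ 2 / 2 + α * (t * ‖w‖) := by nlinarith
      nlinarith [mul_pos ht ht]
    by_contra hcon
    push_neg at hcon
    set δ := w ξhat - α * ‖w‖ with hδ
    have hδpos : 0 < δ := by linarith
    have hden : (0:ℝ) < ‖S w‖ ^ 2 + 1 := by positivity
    have := key (δ / (‖S w‖ ^ 2 + 1)) (by positivity)
    have hfrac : δ / (‖S w‖ ^ 2 + 1) * (‖S w‖ ^ 2 / 2) < δ := by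
      rw [div_mul_eq_mul_div, div_lt_iff₀ hden]
      nlinarith [sq_nonneg ‖S w‖, hδpos]
    linarith
  -- the equality `û ξ̂ = α ‖û‖`
  have heq : uhat ξhat = α * ‖uhat‖ := by
    have hle : uhat ξhat ≤ α * ‖uhat‖ := hdir uhat
    have hge : α * ‖uhat‖ ≤ uhat ξhat := by
      have key : ∀ t : ℝ, 0 < t → t < 1 → α * ‖uhat‖ ≤ uhat ξhat + t * (‖S uhat‖ ^ 2 / 2) := by
        intro t ht ht1
        have h := hmin ((1 - t) • uhat)
        have hS : S ((1 - t) • uhat) - p_d = e - t • S uhat := by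
          rw [map_smul, he]; rw [sub_smul, one_smul]; abel
        rw [hS] at h
        have hexp : ‖e - t • S uhat‖ ^ 2
            = ‖e‖ ^ 2 - 2 * (t * inner ℝ e (S uhat)) + t ^ 2 * ‖S uhat‖ ^ 2 := by
          rw [norm_sub_sq_real, real_inner_smul_right, norm_smul, mul_pow,
            Real.norm_eq_abs, sq_abs]
        have hip : (inner ℝ e (S uhat) : ℝ) = - uhat ξhat := by
          rw [real_inner_comm, hdual uhat e, hξhat]
          simp
        have hn : ‖(1 - t) • uhat‖ = (1 - t) * ‖uhat‖ := by
          exact norm_smul_of_nonneg (by linarith) uhat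
        rw [hexp, hip, hn] at h
        have h' : α * (t * ‖uhat‖) ≤ t * uhat ξhat + t ^ 2 * ‖S uhat‖ ^ 2 / 2 := by nlinarith
        nlinarith [mul_pos ht ht]
      by_contra hcon
      push_neg at hcon
      set δ := α * ‖uhat‖ - uhat ξhat with hδ
      have hδpos : 0 < δ := by linarith
      have hden : (0:ℝ) < ‖S uhat‖ ^ 2 + 2 * δ + 1 := by positivity
      have htpos : 0 < δ / (‖S uhat‖ ^ 2 + 2 * δ + 1) := by positivity
      have htlt : δ / (‖S uhat‖ ^ 2 + 2 * δ + 1) < 1 := by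
        rw [div_lt_one hden]; nlinarith [sq_nonneg ‖S uhat‖]
      have := key _ htpos htlt
      have hfrac : δ / (‖S uhat‖ ^ 2 + 2 * δ + 1) * (‖S uhat‖ ^ 2 / 2) < δ := by
        rw [div_mul_eq_mul_div, div_lt_iff₀ hden]
        nlinarith [sq_nonneg ‖S uhat‖, hδpos]
      linarith
    linarith
  -- Part 1
  have hnorm : ‖ξhat‖ ≤ α := by
    apply NormedSpace.norm_le_dual_bound ℝ ξhat hα.le
    intro w
    rw [Real.norm_eq_abs, abs_le]
    constructor
    · have := hdir (-w)
      rw [ContinuousLinearMap.neg_apply, norm_neg w] at this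
      linarith
    · exact hdir w
  refine ⟨hnorm, ?_⟩
  intro x hx
  by_contra hne
  have hξx : ‖ξhat x‖ ≤ α := le_trans (ξhat.norm_coe_le_norm x) hnorm
  have hlt : ‖ξhat x‖ < α := lt_of_le_of_ne hξx hne
  set β : ℝ := (α + ‖ξhat x‖) / 2 with hβdef
  have hβpos : 0 < β := by positivity
  have hβlt : β < α := by rw [hβdef]; linarith
  have hxW : ‖ξhat x‖ < β := by rw [hβdef]; linarith
  have hWopen : IsOpen {y : D | ‖ξhat y‖ < β} :=
    isOpen_lt (continuous_norm.comp ξhat.continuous) continuous_const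
  obtain ⟨R, hRpos, hRsub⟩ := Metric.isOpen_iff.1 hWopen x hxW
  -- an increasing sequence of radii below `R`
  set r : ℕ → ℝ := fun k => R - R * (1 / 2) ^ (k + 1) with hrdef
  have hrval : ∀ k, r k = R - R * (1 / 2) ^ (k + 1) := fun _ => rfl
  have hrlt : ∀ k, r k < R := by
    intro k
    have hp : (0:ℝ) < (1 / 2) ^ (k + 1) := by positivity
    rw [hrval]
    nlinarith
  have hrstep : ∀ k, r k < r (k + 1) := by
    intro k
    have hp : (0:ℝ) < (1 / 2) ^ (k + 1) := by positivity
    rw [hrval, hrval]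
    have : ((1:ℝ) / 2) ^ (k + 1 + 1) = (1 / 2) ^ (k + 1) * (1 / 2) := pow_succ _ _
    rw [this]
    nlinarith
  have hr0pos : 0 < r 0 := by
    rw [hrval]
    norm_num
    nlinarith [hRpos]
  have hden : ∀ k, 0 < r (k + 1) - r k := fun k => sub_pos.2 (hrstep k)
  -- the cut-off functions
  have hcont : ∀ k : ℕ,
      Continuous fun y : D => max 0 (min 1 ((r (k + 1) - dist y x) / (r (k + 1) - r k))) := by
    intro k
    exact continuous_const.max (continuous_const.min
      ((continuous_const.sub (continuous_id.dist continuous_const)).div_const _))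
  set ρ : ℕ → C(D, ℝ) := fun k => ⟨_, hcont k⟩ with hρdef
  have hval : ∀ k y, ρ k y = max 0 (min 1 ((r (k + 1) - dist y x) / (r (k + 1) - r k))) :=
    fun _ _ => rfl
  have hρ0 : ∀ k y, 0 ≤ ρ k y := fun k y => le_max_left _ _
  have hρ1 : ∀ k y, ρ k y ≤ 1 := fun k y => max_le zero_le_one (min_le_left _ _)
  have hρeq1 : ∀ k y, dist y x ≤ r k → ρ k y = 1 := by
    intro k y hy
    have h1le : 1 ≤ (r (k + 1) - dist y x) / (r (k + 1) - r k) := by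
      rw [le_div_iff₀ (hden k)]
      linarith
    rw [hval, min_eq_left h1le, max_eq_right zero_le_one]
  have hρzero : ∀ k y, r (k + 1) ≤ dist y x → ρ k y = 0 := by
    intro k y hy
    have hq : (r (k + 1) - dist y x) / (r (k + 1) - r k) ≤ 0 :=
      div_nonpos_iff.2 (Or.inr ⟨by linarith, (hden k).le⟩)
    rw [hval, max_eq_left (le_trans (min_le_right _ _) hq)]
  have hρpos : ∀ k y, ρ k y ≠ 0 → dist y x < r (k + 1) := by
    intro k y hy
    by_contra hc
    push_neg at hc
    exact hy (hρzero k y hc)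
  have hchain : ∀ k y, ρ k y ≠ 0 → ρ (k + 1) y = 1 := fun k y hy =>
    hρeq1 (k + 1) y (hρpos k y hy).le
  have hWmem : ∀ k y, ρ k y ≠ 0 → ‖ξhat y‖ < β := by
    intro k y hy
    exact hRsub (Metric.mem_ball.2 (lt_trans (hρpos k y hy) (hrlt _)))
  -- the witness test function
  obtain ⟨φ, hφ0, hφne⟩ := hx (Metric.ball x (r 0)) (Metric.ball_mem_nhds x hr0pos)
  have hφnz : φ ≠ 0 := by
    intro h
    exact hφne (by rw [h, map_zero])
  have hφnorm : 0 < ‖φ‖ := norm_pos_iff.2 hφnz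
  set m : ℝ := ‖φ‖⁻¹ * |uhat φ| with hmdef
  have hm : 0 < m := by
    have : 0 < |uhat φ| := abs_pos.2 hφne
    positivity
  set N : ℕ → ℝ := fun k => ‖uhat.comp (mulCLM ((1 : C(D, ℝ)) - ρ k))‖ with hNdef
  have hNval : ∀ k, N k = ‖uhat.comp (mulCLM ((1 : C(D, ℝ)) - ρ k))‖ := fun _ => rfl
  have hNnonneg : ∀ k, 0 ≤ N k := fun k => by rw [hNval k]; exact norm_nonneg (uhat.comp (mulCLM ((1 : C(D, ℝ)) - ρ k)))
  -- base inequality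
  have hbase : m ≤ ‖uhat‖ - N 0 := by
    set ψ0 : C(D, H₁) := ‖φ‖⁻¹ • φ with hψ0def
    have hψ0val : ∀ y, ψ0 y = ‖φ‖⁻¹ • φ y := fun _ => rfl
    have hs0 : ∀ y, ψ0 y ≠ 0 → ρ 0 y = 1 := by
      intro y hy
      have hφy : φ y ≠ 0 := by
        intro h
        exact hy (by rw [hψ0val, h, smul_zero])
      have hyU : y ∈ Metric.ball x (r 0) := by
        by_contra hc
        exact hφy (hφ0 y hc)
      exact hρeq1 0 y (le_of_lt (Metric.mem_ball.1 hyU))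
    have hn0 : ∀ y, ‖ψ0 y‖ ≤ 1 := by
      intro y
      rw [hψ0val, norm_smul, Real.norm_eq_abs, abs_of_nonneg (inv_nonneg.2 hφnorm.le)]
      have h2 : ‖φ‖⁻¹ * ‖φ y‖ ≤ ‖φ‖⁻¹ * ‖φ‖ :=
        mul_le_mul_of_nonneg_left (φ.norm_coe_le_norm y) (inv_nonneg.2 hφnorm.le)
      rw [inv_mul_cancel₀ (ne_of_gt hφnorm)] at h2
      exact h2
    have hs0' : ∀ y, (-ψ0) y ≠ 0 → ρ 0 y = 1 := by
      intro y hy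
      apply hs0 y
      intro h
      apply hy
      simp [h]
    have hn0' : ∀ y, ‖(-ψ0) y‖ ≤ 1 := by
      intro y
      rw [ContinuousMap.neg_apply, norm_neg]
      exact hn0 y
    have l1 := loc_ineq uhat (ρ 0) ψ0 (hρ0 0) (hρ1 0) hs0 hn0
    have l2 := loc_ineq uhat (ρ 0) (-ψ0) (hρ0 0) (hρ1 0) hs0' hn0'
    rw [map_neg] at l2
    have hψval : uhat ψ0 = ‖φ‖⁻¹ * uhat φ := by rw [hψ0def, map_smul, smul_eq_mul]
    rcases abs_cases (uhat φ) with ⟨hc, _⟩ | ⟨hc, _⟩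
    · have hmval : m = uhat ψ0 := by rw [hmdef, hc, hψval]
      rw [hmval]
      linarith [l1]
    · have hmval : m = - uhat ψ0 := by rw [hmdef, hc, hψval]; ring
      rw [hmval]
      linarith [l2]
  -- step inequality
  have hstep : ∀ k, α * (‖uhat‖ - N k) ≤ β * (‖uhat‖ - N (k + 1)) := by
    intro k
    set ζ : C(D, H₁) := mulCLM (ρ k) ξhat with hζdef
    have hζval : ∀ y, ζ y = ρ k y • ξhat y := fun _ => rfl
    have hsplit : mulCLM ((1 : C(D, ℝ)) - ρ k) ξhat = ξhat - ζ := by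
      ext y
      simp only [mulCLM_apply, ContinuousMap.sub_apply, ContinuousMap.one_apply, hζval,
        sub_smul, one_smul]
    -- lower bound for `uhat ζ`
    have hupper : uhat (mulCLM ((1 : C(D, ℝ)) - ρ k) ξhat) ≤ N k * α := by
      have h1 : uhat (mulCLM ((1 : C(D, ℝ)) - ρ k) ξhat)
          = (uhat.comp (mulCLM ((1 : C(D, ℝ)) - ρ k))) ξhat := rfl
      rw [h1]
      calc (uhat.comp (mulCLM ((1 : C(D, ℝ)) - ρ k))) ξhat
          ≤ ‖(uhat.comp (mulCLM ((1 : C(D, ℝ)) - ρ k))) ξhat‖ := le_abs_self _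
        _ ≤ N k * ‖ξhat‖ := by rw [hNval]; exact ContinuousLinearMap.le_opNorm _ _
        _ ≤ N k * α := mul_le_mul_of_nonneg_left hnorm (hNnonneg k)
    have hζlow : α * (‖uhat‖ - N k) ≤ uhat ζ := by
      have hsub : uhat ζ = uhat ξhat - uhat (mulCLM ((1 : C(D, ℝ)) - ρ k) ξhat) := by
        rw [hsplit, map_sub]
        ring
      rw [hsub, heq]
      nlinarith [hupper]
    -- upper bound for `uhat ζ`
    set ψ : C(D, H₁) := β⁻¹ • ζ with hψdef
    have hψval : ∀ y, ψ y = β⁻¹ • ζ y := fun _ => rfl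
    have hs : ∀ y, ψ y ≠ 0 → ρ (k + 1) y = 1 := by
      intro y hy
      apply hchain k y
      intro h
      apply hy
      rw [hψval, hζval, h, zero_smul, smul_zero]
    have hn : ∀ y, ‖ψ y‖ ≤ 1 := by
      intro y
      rw [hψval, hζval, norm_smul, norm_smul, Real.norm_eq_abs, Real.norm_eq_abs,
        abs_of_nonneg (inv_nonneg.2 hβpos.le), abs_of_nonneg (hρ0 k y)]
      rcases eq_or_ne (ρ k y) 0 with h | h
      · rw [h]
        norm_num
      · have hξy : ‖ξhat y‖ ≤ β := (hWmem k y h).le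
        have h1 : ρ k y * ‖ξhat y‖ ≤ β := by
          nlinarith [hρ0 k y, hρ1 k y, norm_nonneg (ξhat y)]
        calc β⁻¹ * (ρ k y * ‖ξhat y‖) ≤ β⁻¹ * β :=
            mul_le_mul_of_nonneg_left h1 (inv_nonneg.2 hβpos.le)
          _ = 1 := inv_mul_cancel₀ (ne_of_gt hβpos)
    have l := loc_ineq uhat (ρ (k + 1)) ψ (hρ0 (k + 1)) (hρ1 (k + 1)) hs hn
    have hψu : uhat ψ = β⁻¹ * uhat ζ := by rw [hψdef, map_smul, smul_eq_mul]
    rw [hψu] at l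
    have hζup : uhat ζ ≤ β * (‖uhat‖ - N (k + 1)) := by
      have h2 : β⁻¹ * uhat ζ ≤ ‖uhat‖ - N (k + 1) := by linarith
      have h3 := mul_le_mul_of_nonneg_left h2 hβpos.le
      rwa [← mul_assoc, mul_inv_cancel₀ (ne_of_gt hβpos), one_mul] at h3
    linarith
  -- geometric growth gives a contradiction
  set q : ℝ := α / β with hqdef
  have hq : 1 < q := (one_lt_div hβpos).2 hβlt
  have hqpos : 0 < q := lt_trans one_pos hq
  have hind : ∀ k, m * q ^ k ≤ ‖uhat‖ - N k := by
    intro k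
    induction k with
    | zero => simpa using hbase
    | succ k ih =>
        have h1 : q * (‖uhat‖ - N k) ≤ ‖uhat‖ - N (k + 1) := by
          rw [hqdef, div_mul_eq_mul_div, div_le_iff₀ hβpos]
          nlinarith [hstep k]
        have h2 : q * (m * q ^ k) ≤ q * (‖uhat‖ - N k) :=
          mul_le_mul_of_nonneg_left ih hqpos.le
        calc m * q ^ (k + 1) = q * (m * q ^ k) := by ring
          _ ≤ ‖uhat‖ - N (k + 1) := h2.trans h1
  obtain ⟨n, hn⟩ := pow_unbounded_of_one_lt (‖uhat‖ / m) hq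
  have h1 := hind n
  have h2 : ‖uhat‖ - N n ≤ ‖uhat‖ := by linarith [hNnonneg n]
  have h3 : ‖uhat‖ < m * q ^ n := by
    rw [div_lt_iff₀ hm] at hn
    nlinarith
  linarith
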